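/- Fix an initial state x ∈ ℝ^n, μ ≥ 0, ε ≥ 0, a horizon N, and a normalized input sequence ũ(0), …, ũ(N−1) ∈ ℝ^m with ‖ũ(i)‖∞ ≤ 1 for all i. The following are equivalent: (i) for every disturbance sequence d(0), …, d(N−1) with ‖d(i)‖∞ ≤ μ for all i, the open-loop trajectory x(0) = x, x(k+1) = A_k x(k) + B_k (ε ũ(k)) + d(k) satisfies G_k x(k) ≤ H_k for all k = 0, …, N; (ii) there exists a matrix P ∈ ℝ^{(N+1)q × 2n(N+1)} with all entries nonnegative such that P A_b = μ E^{ol} and P B_b ≤ F^{ol}(x, ũ, ε). -/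
import Mathlib


open Matrix Finset

noncomputable section

/-- Ordered product `M (k-1) * M (k-2) * ⋯ * M i` (empty product = identity when `k ≤ i`). -/
def mprod {n : ℕ} (M : ℕ → Matrix (Fin n) (Fin n) ℝ) (i k : ℕ) :
    Matrix (Fin n) (Fin n) ℝ :=
  (((List.range' i (k - i)).reverse).map M).prod

def Abar {n m : ℕ} (A : ℕ → Matrix (Fin n) (Fin n) ℝ) (B : ℕ → Matrix (Fin n) (Fin m) ℝ)
    (α₁ : Matrix (Fin m) (Fin n) ℝ) (j : ℕ) : Matrix (Fin n) (Fin n) ℝ :=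
  A j + B j * α₁

def trajCL {n m : ℕ} (A : ℕ → Matrix (Fin n) (Fin n) ℝ) (B : ℕ → Matrix (Fin n) (Fin m) ℝ)
    (α₁ : Matrix (Fin m) (Fin n) ℝ) (α₂ : Fin m → ℝ) (d : ℕ → Fin n → ℝ)
    (x0 : Fin n → ℝ) : ℕ → Fin n → ℝ
  | 0 => x0
  | k + 1 =>
      (A k).mulVec (trajCL A B α₁ α₂ d x0 k)
        + (B k).mulVec (α₁.mulVec (trajCL A B α₁ α₂ d x0 k) + α₂) + d k

def Eblk {n : ℕ} (N : ℕ) (M : ℕ → Matrix (Fin n) (Fin n) ℝ) (k : ℕ) :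
    Matrix (Fin n) (Fin (N + 1) × Fin n) ℝ :=
  Matrix.of fun r jc =>
    if 1 ≤ (jc.1 : ℕ) ∧ (jc.1 : ℕ) ≤ k then mprod M (jc.1 : ℕ) k r jc.2 else 0

def Fblk {n m : ℕ} (A : ℕ → Matrix (Fin n) (Fin n) ℝ) (B : ℕ → Matrix (Fin n) (Fin m) ℝ)
    (α₁ : Matrix (Fin m) (Fin n) ℝ) (α₂ : Fin m → ℝ) (x : Fin n → ℝ) (k : ℕ) : Fin n → ℝ :=
  (mprod (Abar A B α₁) 0 k).mulVec x
    + ∑ i ∈ Finset.range k, (mprod (Abar A B α₁) (i + 1) k * B i).mulVec α₂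

def Ex {n m q : ℕ} (N : ℕ) (A : ℕ → Matrix (Fin n) (Fin n) ℝ)
    (B : ℕ → Matrix (Fin n) (Fin m) ℝ) (G : ℕ → Matrix (Fin q) (Fin n) ℝ)
    (α₁ : Matrix (Fin m) (Fin n) ℝ) :
    Matrix (Fin (N + 1) × Fin q) (Fin (N + 1) × Fin n) ℝ :=
  Matrix.of fun kr jc => (G (kr.1 : ℕ) * Eblk N (Abar A B α₁) (kr.1 : ℕ)) kr.2 jc

def Fx {n m q : ℕ} (N : ℕ) (A : ℕ → Matrix (Fin n) (Fin n) ℝ)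
    (B : ℕ → Matrix (Fin n) (Fin m) ℝ) (G : ℕ → Matrix (Fin q) (Fin n) ℝ)
    (H : ℕ → Fin q → ℝ) (α₁ : Matrix (Fin m) (Fin n) ℝ) (α₂ : Fin m → ℝ)
    (x : Fin n → ℝ) : Fin (N + 1) × Fin q → ℝ :=
  fun kr => H (kr.1 : ℕ) kr.2 - (G (kr.1 : ℕ)).mulVec (Fblk A B α₁ α₂ x (kr.1 : ℕ)) kr.2

def Au (m : ℕ) : Matrix (Fin m ⊕ Fin m) (Fin m) ℝ := Matrix.fromRows 1 (-1)

def Sk {n m : ℕ} (A : ℕ → Matrix (Fin n) (Fin n) ℝ) (B : ℕ → Matrix (Fin n) (Fin m) ℝ)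
    (α₁ : Matrix (Fin m) (Fin n) ℝ) (α₂ : Fin m → ℝ) (x : Fin n → ℝ) (k : ℕ) : Fin m → ℝ :=
  α₁.mulVec (Fblk A B α₁ α₂ x k) + α₂

def Ecl {n m q : ℕ} (N : ℕ) (A : ℕ → Matrix (Fin n) (Fin n) ℝ)
    (B : ℕ → Matrix (Fin n) (Fin m) ℝ) (G : ℕ → Matrix (Fin q) (Fin n) ℝ)
    (α₁ : Matrix (Fin m) (Fin n) ℝ) :
    Matrix ((Fin (N + 1) × Fin q) ⊕ (Fin N × (Fin m ⊕ Fin m))) (Fin (N + 1) × Fin n) ℝ :=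
  Matrix.fromRows (Ex N A B G α₁)
    (Matrix.of fun kr jc => (Au m * α₁ * Eblk N (Abar A B α₁) (kr.1 : ℕ)) kr.2 jc)

def Fcl {n m q : ℕ} (N : ℕ) (A : ℕ → Matrix (Fin n) (Fin n) ℝ)
    (B : ℕ → Matrix (Fin n) (Fin m) ℝ) (G : ℕ → Matrix (Fin q) (Fin n) ℝ)
    (H : ℕ → Fin q → ℝ) (α₁ : Matrix (Fin m) (Fin n) ℝ) (α₂ : Fin m → ℝ)
    (x : Fin n → ℝ) (ε : ℝ) : (Fin (N + 1) × Fin q) ⊕ (Fin N × (Fin m ⊕ Fin m)) → ℝ :=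
  Sum.elim (Fx N A B G H α₁ α₂ x)
    (fun kr => ε - (Au m).mulVec (Sk A B α₁ α₂ x (kr.1 : ℕ)) kr.2)

def AbM (N n : ℕ) :
    Matrix ((Fin (N + 1) × Fin n) ⊕ (Fin (N + 1) × Fin n)) (Fin (N + 1) × Fin n) ℝ :=
  Matrix.fromRows 1 (-1)

def BbV (N n : ℕ) : (Fin (N + 1) × Fin n) ⊕ (Fin (N + 1) × Fin n) → ℝ := fun _ => 1

def trajOL {n m : ℕ} (A : ℕ → Matrix (Fin n) (Fin n) ℝ) (B : ℕ → Matrix (Fin n) (Fin m) ℝ)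
    (u : ℕ → Fin m → ℝ) (d : ℕ → Fin n → ℝ) (x0 : Fin n → ℝ) : ℕ → Fin n → ℝ
  | 0 => x0
  | k + 1 => (A k).mulVec (trajOL A B u d x0 k) + (B k).mulVec (u k) + d k

def Eol {n q : ℕ} (N : ℕ) (A : ℕ → Matrix (Fin n) (Fin n) ℝ)
    (G : ℕ → Matrix (Fin q) (Fin n) ℝ) :
    Matrix (Fin (N + 1) × Fin q) (Fin (N + 1) × Fin n) ℝ :=
  Matrix.of fun kr jc => (G (kr.1 : ℕ) * Eblk N A (kr.1 : ℕ)) kr.2 jc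

def Fol {n m q : ℕ} (N : ℕ) (A : ℕ → Matrix (Fin n) (Fin n) ℝ)
    (B : ℕ → Matrix (Fin n) (Fin m) ℝ) (G : ℕ → Matrix (Fin q) (Fin n) ℝ)
    (H : ℕ → Fin q → ℝ) (x : Fin n → ℝ) (ut : ℕ → Fin m → ℝ) (ε : ℝ) :
    Fin (N + 1) × Fin q → ℝ :=
  fun kr => H (kr.1 : ℕ) kr.2
    - (G (kr.1 : ℕ)).mulVec ((mprod A 0 (kr.1 : ℕ)).mulVec x) kr.2
    - ε * (G (kr.1 : ℕ)).mulVec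
        (∑ i ∈ Finset.range (kr.1 : ℕ), (mprod A (i + 1) (kr.1 : ℕ) * B i).mulVec (ut i)) kr.2

lemma mprod_le {n : ℕ} (M : ℕ → Matrix (Fin n) (Fin n) ℝ) {i k : ℕ} (h : k ≤ i) :
    mprod M i k = 1 := by
  unfold mprod
  rw [Nat.sub_eq_zero_of_le h]
  simp

lemma mprod_succ {n : ℕ} (M : ℕ → Matrix (Fin n) (Fin n) ℝ) {i k : ℕ} (h : i ≤ k) :
    mprod M i (k + 1) = M k * mprod M i k := by
  unfold mprod
  have h1 : k + 1 - i = (k - i) + 1 := by omega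
  have h2 : i + 1 * (k - i) = k := by omega
  rw [h1, List.range'_concat, h2]
  simp

lemma mulVec_sum' {a b : Type*} [Fintype b] (M : Matrix a b ℝ) (s : Finset ℕ)
    (v : ℕ → b → ℝ) : M.mulVec (∑ i ∈ s, v i) = ∑ i ∈ s, M.mulVec (v i) :=
  map_sum M.mulVecLin v s

lemma trajOL_eq {n m : ℕ} (A : ℕ → Matrix (Fin n) (Fin n) ℝ)
    (B : ℕ → Matrix (Fin n) (Fin m) ℝ)
    (u : ℕ → Fin m → ℝ) (d : ℕ → Fin n → ℝ) (x0 : Fin n → ℝ) (k : ℕ) :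
    trajOL A B u d x0 k = (mprod A 0 k).mulVec x0
      + ∑ i ∈ Finset.range k, (mprod A (i + 1) k).mulVec ((B i).mulVec (u i) + d i) := by
  induction k with
  | zero => simp [trajOL, mprod_le A le_rfl]
  | succ k ih =>
      show (A k).mulVec (trajOL A B u d x0 k) + (B k).mulVec (u k) + d k = _
      rw [ih, Matrix.mulVec_add, Matrix.mulVec_mulVec, ← mprod_succ A (Nat.zero_le k),
        mulVec_sum', Finset.sum_range_succ, mprod_le A le_rfl, Matrix.one_mulVec]
      have hs : ∀ i ∈ Finset.range k,
          (A k).mulVec ((mprod A (i + 1) k).mulVec ((B i).mulVec (u i) + d i))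
            = (mprod A (i + 1) (k + 1)).mulVec ((B i).mulVec (u i) + d i) := by
        intro i hi
        rw [Matrix.mulVec_mulVec, ← mprod_succ A (by simp at hi; omega)]
      rw [Finset.sum_congr rfl hs]
      abel

lemma Eol_entry {n q N : ℕ} (A : ℕ → Matrix (Fin n) (Fin n) ℝ)
    (G : ℕ → Matrix (Fin q) (Fin n) ℝ) (kr : Fin (N + 1) × Fin q)
    (jc : Fin (N + 1) × Fin n) :
    Eol N A G kr jc
      = if 1 ≤ (jc.1 : ℕ) ∧ (jc.1 : ℕ) ≤ (kr.1 : ℕ) then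
          (G (kr.1 : ℕ) * mprod A (jc.1 : ℕ) (kr.1 : ℕ)) kr.2 jc.2
        else 0 := by
  by_cases h : 1 ≤ (jc.1 : ℕ) ∧ (jc.1 : ℕ) ≤ (kr.1 : ℕ)
  · rw [if_pos h]
    simp only [Eol, Matrix.of_apply, Matrix.mul_apply, Eblk]
    exact Finset.sum_congr rfl fun s _ => by rw [if_pos h]
  · rw [if_neg h]
    simp only [Eol, Matrix.of_apply, Matrix.mul_apply, Eblk]
    exact Finset.sum_eq_zero fun s _ => by rw [if_neg h, mul_zero]

lemma sum_restrict {n N : ℕ} {k : ℕ} (hk : k ≤ N) (f : Fin (N + 1) × Fin n → ℝ)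
    (g : ℕ → ℝ)
    (hg : ∀ j : Fin (N + 1), (∑ c : Fin n, f (j, c)) = g (j : ℕ))
    (h0 : ∀ j, j = 0 ∨ k < j → g j = 0) :
    ∑ jc : Fin (N + 1) × Fin n, f jc = ∑ i ∈ Finset.range k, g (i + 1) := by
  rw [Fintype.sum_prod_type]
  calc ∑ j : Fin (N + 1), ∑ c : Fin n, f (j, c)
      = ∑ j : Fin (N + 1), g (j : ℕ) := Finset.sum_congr rfl fun j _ => hg j
    _ = ∑ j ∈ Finset.range (N + 1), g j := Fin.sum_univ_eq_sum_range g (N + 1)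
    _ = ∑ j ∈ Finset.Ico 1 (k + 1), g j := by
        refine (Finset.sum_subset ?_ ?_).symm
        · intro j hj
          simp only [Finset.mem_Ico] at hj
          simp only [Finset.mem_range]
          omega
        · intro j hj hj2
          apply h0
          simp only [Finset.mem_range] at hj
          simp only [Finset.mem_Ico] at hj2
          omega
    _ = ∑ i ∈ Finset.range k, g (1 + i) := by
        rw [Finset.sum_Ico_eq_sum_range]
        norm_num
    _ = ∑ i ∈ Finset.range k, g (i + 1) :=
        Finset.sum_congr rfl fun i _ => by rw [add_comm]

lemma G_traj {n m q : ℕ} (A : ℕ → Matrix (Fin n) (Fin n) ℝ)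
    (B : ℕ → Matrix (Fin n) (Fin m) ℝ) (G : ℕ → Matrix (Fin q) (Fin n) ℝ)
    (ut : ℕ → Fin m → ℝ) (d : ℕ → Fin n → ℝ) (x : Fin n → ℝ) (ε : ℝ) (k : ℕ) (r : Fin q) :
    (G k).mulVec (trajOL A B (fun i => ε • ut i) d x k) r
      = (G k).mulVec ((mprod A 0 k).mulVec x) r
        + ε * (G k).mulVec
            (∑ i ∈ Finset.range k, (mprod A (i + 1) k * B i).mulVec (ut i)) r
        + ∑ i ∈ Finset.range k, ((G k * mprod A (i + 1) k).mulVec (d i)) r := by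
  rw [trajOL_eq]
  have hs : ∀ i ∈ Finset.range k,
      (mprod A (i + 1) k).mulVec ((B i).mulVec (ε • ut i) + d i)
        = ε • ((mprod A (i + 1) k * B i).mulVec (ut i))
          + (mprod A (i + 1) k).mulVec (d i) := by
    intro i _
    rw [Matrix.mulVec_smul, Matrix.mulVec_add, Matrix.mulVec_smul, Matrix.mulVec_mulVec]
  rw [Finset.sum_congr rfl hs, Finset.sum_add_distrib, ← Finset.smul_sum,
    Matrix.mulVec_add, Matrix.mulVec_add, Matrix.mulVec_smul,
    mulVec_sum' (G k) (Finset.range k) (fun i => (mprod A (i + 1) k).mulVec (d i))]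
  have hs2 : ∀ i ∈ Finset.range k,
      (G k).mulVec ((mprod A (i + 1) k).mulVec (d i))
        = (G k * mprod A (i + 1) k).mulVec (d i) := fun i _ => Matrix.mulVec_mulVec ..
  rw [Finset.sum_congr rfl hs2]
  simp only [Pi.add_apply, Pi.smul_apply, smul_eq_mul, Finset.sum_apply]
  ring

lemma mul_AbM_apply {N n q' : ℕ}
    (P : Matrix (Fin (N + 1) × Fin q') ((Fin (N + 1) × Fin n) ⊕ (Fin (N + 1) × Fin n)) ℝ)
    (kr : Fin (N + 1) × Fin q') (jc : Fin (N + 1) × Fin n) :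
    (P * AbM N n) kr jc = P kr (Sum.inl jc) - P kr (Sum.inr jc) := by
  rw [Matrix.mul_apply, Fintype.sum_sum_type]
  simp [AbM, Matrix.one_apply, mul_ite, Finset.sum_ite_eq, sub_eq_add_neg]

lemma mulVec_BbV_apply {N n q' : ℕ}
    (P : Matrix (Fin (N + 1) × Fin q') ((Fin (N + 1) × Fin n) ⊕ (Fin (N + 1) × Fin n)) ℝ)
    (kr : Fin (N + 1) × Fin q') :
    P.mulVec (BbV N n) kr
      = ∑ j : Fin (N + 1) × Fin n, P kr (Sum.inl j)
        + ∑ j : Fin (N + 1) × Fin n, P kr (Sum.inr j) := by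
  simp [Matrix.mulVec, dotProduct, BbV, Fintype.sum_sum_type]

lemma max_sub_max_neg (a : ℝ) : max a 0 - max (-a) 0 = a := by
  rcases le_total 0 a with h | h
  · rw [max_eq_left h, max_eq_right (neg_nonpos.mpr h), sub_zero]
  · rw [max_eq_right h, max_eq_left (neg_nonneg.mpr h)]; ring

lemma max_add_max_neg (a : ℝ) : max a 0 + max (-a) 0 = |a| := by
  rcases le_total 0 a with h | h
  · rw [max_eq_left h, max_eq_right (neg_nonpos.mpr h), add_zero, abs_of_nonneg h]
  · rw [max_eq_right h, max_eq_left (neg_nonneg.mpr h), zero_add, abs_of_nonpos h]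
/-- Open-loop robust condition ↔ Farkas certificate: for a normalized input sequence
`ũ` with `‖ũ(i)‖∞ ≤ 1` and applied inputs `u(k) = ε ũ(k)`, the polytopic specification
`G_k x(k) ≤ H_k` holds for all disturbances with `‖d(i)‖∞ ≤ μ` iff a nonnegative matrix
`P` certifies `P A_b = μ E^{ol}` and `P B_b ≤ F^{ol}(x, ũ, ε)`. -/
theorem openLoop_farkas {n m q N : ℕ}
    (A : ℕ → Matrix (Fin n) (Fin n) ℝ) (B : ℕ → Matrix (Fin n) (Fin m) ℝ)
    (G : ℕ → Matrix (Fin q) (Fin n) ℝ) (H : ℕ → Fin q → ℝ)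
    (x : Fin n → ℝ) (μ ε : ℝ) (hμ : 0 ≤ μ) (hε : 0 ≤ ε)
    (ut : ℕ → Fin m → ℝ) (hut : ∀ i, i < N → ‖ut i‖ ≤ 1) :
    (∀ d : ℕ → Fin n → ℝ, (∀ i, i < N → ‖d i‖ ≤ μ) →
        ∀ k, k ≤ N → (G k).mulVec (trajOL A B (fun i => ε • ut i) d x k) ≤ H k) ↔
      (∃ P : Matrix (Fin (N + 1) × Fin q)
          ((Fin (N + 1) × Fin n) ⊕ (Fin (N + 1) × Fin n)) ℝ,
        (∀ i j, 0 ≤ P i j) ∧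
        P * AbM N n = μ • Eol N A G ∧
        P.mulVec (BbV N n) ≤ Fol N A B G H x ut ε) := by
    -- row-wise ℓ¹ norm of Eol
  have habs : ∀ kr : Fin (N + 1) × Fin q,
      ∑ jc : Fin (N + 1) × Fin n, |Eol N A G kr jc|
        = ∑ i ∈ Finset.range (kr.1 : ℕ), ∑ c : Fin n,
            |(G (kr.1 : ℕ) * mprod A (i + 1) (kr.1 : ℕ)) kr.2 c| := by
    intro kr
    have key := sum_restrict (n := n) (N := N) (k := (kr.1 : ℕ))
      (Nat.lt_succ_iff.mp kr.1.isLt)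
      (fun jc => |Eol N A G kr jc|)
      (fun j => if 1 ≤ j ∧ j ≤ (kr.1 : ℕ) then
          ∑ c : Fin n, |(G (kr.1 : ℕ) * mprod A j (kr.1 : ℕ)) kr.2 c| else 0)
      ?_ ?_
    · rw [key]
      refine Finset.sum_congr rfl fun i hi => ?_
      simp only [Finset.mem_range] at hi
      rw [if_pos ⟨by omega, by omega⟩]
    · intro j
      by_cases h : 1 ≤ (j : ℕ) ∧ (j : ℕ) ≤ (kr.1 : ℕ)
      · rw [if_pos h]
        refine Finset.sum_congr rfl fun c _ => ?_
        rw [show Eol N A G kr (j, c)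
            = (G (kr.1 : ℕ) * mprod A (j : ℕ) (kr.1 : ℕ)) kr.2 c from by
          rw [Eol_entry]; exact if_pos h]
      · rw [if_neg h]
        refine Finset.sum_eq_zero fun c _ => ?_
        rw [show Eol N A G kr (j, c) = 0 from by rw [Eol_entry]; exact if_neg h, abs_zero]
    · intro j hj
      rw [if_neg (by omega)]
  constructor
  · -- robust ⟹ certificate
    intro hrob
    have key : ∀ kr : Fin (N + 1) × Fin q,
        μ * ∑ jc : Fin (N + 1) × Fin n, |Eol N A G kr jc|
          ≤ Fol N A B G H x ut ε kr := by
      intro kr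
      set k := (kr.1 : ℕ) with hk
      set r := kr.2 with hr
      set d : ℕ → Fin n → ℝ := fun i c =>
        μ * (if 0 ≤ (G k * mprod A (i + 1) k) r c then 1 else -1) with hdd
      have hd : ∀ i, i < N → ‖d i‖ ≤ μ := by
        intro i _
        rw [pi_norm_le_iff_of_nonneg hμ]
        intro c
        rw [Real.norm_eq_abs, hdd]
        dsimp only
        split_ifs <;> simp [abs_mul, abs_of_nonneg hμ]
      have h1 := Pi.le_def.mp (hrob d hd k (Nat.lt_succ_iff.mp kr.1.isLt)) r
      rw [G_traj] at h1
      have h2 : ∑ i ∈ Finset.range k, ((G k * mprod A (i + 1) k).mulVec (d i)) r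
          = μ * ∑ jc : Fin (N + 1) × Fin n, |Eol N A G kr jc| := by
        rw [habs, Finset.mul_sum]
        refine Finset.sum_congr rfl fun i _ => ?_
        rw [Finset.mul_sum]
        simp only [Matrix.mulVec, dotProduct, hdd]
        refine Finset.sum_congr rfl fun c _ => ?_
        rcases le_or_gt 0 ((G k * mprod A (i + 1) k) r c) with h | h
        · rw [if_pos h, abs_of_nonneg h]; ring
        · rw [if_neg (not_le.mpr h), abs_of_neg h]; ring
      rw [h2] at h1
      simp only [Fol, ← hk, ← hr]
      linarith
    refine ⟨Matrix.of fun kr a => Sum.elim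
        (fun j => max (μ * Eol N A G kr j) 0)
        (fun j => max (-(μ * Eol N A G kr j)) 0) a, ?_, ?_, ?_⟩
    · intro i j
      cases j <;> exact le_max_right _ 0
    · ext kr jc
      rw [mul_AbM_apply]
      show max (μ * Eol N A G kr jc) 0 - max (-(μ * Eol N A G kr jc)) 0 = _
      rw [max_sub_max_neg]
      simp [Matrix.smul_apply]
    · rw [Pi.le_def]
      intro kr
      rw [mulVec_BbV_apply]
      have : (∑ j : Fin (N + 1) × Fin n, max (μ * Eol N A G kr j) 0)
          + ∑ j : Fin (N + 1) × Fin n, max (-(μ * Eol N A G kr j)) 0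
            = μ * ∑ jc : Fin (N + 1) × Fin n, |Eol N A G kr jc| := by
        rw [← Finset.sum_add_distrib, Finset.mul_sum]
        exact Finset.sum_congr rfl fun j _ => by
          rw [max_add_max_neg, abs_mul, abs_of_nonneg hμ]
      calc (∑ j : Fin (N + 1) × Fin n,
              (Matrix.of fun kr a => Sum.elim
                (fun j => max (μ * Eol N A G kr j) 0)
                (fun j => max (-(μ * Eol N A G kr j)) 0) a) kr (Sum.inl j))
            + ∑ j : Fin (N + 1) × Fin n,
              (Matrix.of fun kr a => Sum.elim
                (fun j => max (μ * Eol N A G kr j) 0)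
                (fun j => max (-(μ * Eol N A G kr j)) 0) a) kr (Sum.inr j)
          = μ * ∑ jc : Fin (N + 1) × Fin n, |Eol N A G kr jc| := this
        _ ≤ Fol N A B G H x ut ε kr := key kr
  · -- certificate ⟹ robust
    rintro ⟨P, hP0, hPA, hPB⟩ d hd k hk
    have key : ∀ kr : Fin (N + 1) × Fin q,
        μ * ∑ jc : Fin (N + 1) × Fin n, |Eol N A G kr jc|
          ≤ Fol N A B G H x ut ε kr := by
      intro kr
      have h1 : ∀ jc, μ * Eol N A G kr jc = P kr (Sum.inl jc) - P kr (Sum.inr jc) := by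
        intro jc
        rw [← mul_AbM_apply, hPA]
        simp [Matrix.smul_apply]
      calc μ * ∑ jc : Fin (N + 1) × Fin n, |Eol N A G kr jc|
          = ∑ jc : Fin (N + 1) × Fin n, |μ * Eol N A G kr jc| := by
            rw [Finset.mul_sum]
            exact Finset.sum_congr rfl fun j _ => by rw [abs_mul, abs_of_nonneg hμ]
        _ = ∑ jc : Fin (N + 1) × Fin n, |P kr (Sum.inl jc) - P kr (Sum.inr jc)| :=
            Finset.sum_congr rfl fun j _ => by rw [h1]
        _ ≤ ∑ jc : Fin (N + 1) × Fin n, (P kr (Sum.inl jc) + P kr (Sum.inr jc)) :=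
            Finset.sum_le_sum fun j _ => (abs_sub _ _).trans
              (by rw [abs_of_nonneg (hP0 _ _), abs_of_nonneg (hP0 _ _)])
        _ = P.mulVec (BbV N n) kr := by rw [mulVec_BbV_apply, Finset.sum_add_distrib]
        _ ≤ Fol N A B G H x ut ε kr := hPB kr
    rw [Pi.le_def]
    intro r
    set kr : Fin (N + 1) × Fin q := (⟨k, Nat.lt_succ_of_le hk⟩, r) with hkr
    have hkv : (kr.1 : ℕ) = k := rfl
    rw [G_traj]
    have hdot : ∑ i ∈ Finset.range k, ((G k * mprod A (i + 1) k).mulVec (d i)) r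
        ≤ μ * ∑ jc : Fin (N + 1) × Fin n, |Eol N A G kr jc| := by
      rw [habs, hkv, Finset.mul_sum]
      refine Finset.sum_le_sum fun i hi => ?_
      simp only [Finset.mem_range] at hi
      rw [Finset.mul_sum]
      simp only [Matrix.mulVec, dotProduct]
      refine Finset.sum_le_sum fun c _ => ?_
      have hdc : |d i c| ≤ μ := by
        have h2 := norm_le_pi_norm (d i) c
        rw [Real.norm_eq_abs] at h2
        exact h2.trans (hd i (by omega))
      calc (G k * mprod A (i + 1) k) r c * d i c
          ≤ |(G k * mprod A (i + 1) k) r c * d i c| := le_abs_self _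
        _ = |(G k * mprod A (i + 1) k) r c| * |d i c| := abs_mul _ _
        _ ≤ |(G k * mprod A (i + 1) k) r c| * μ :=
            mul_le_mul_of_nonneg_left hdc (abs_nonneg _)
        _ = μ * |(G k * mprod A (i + 1) k) r c| := mul_comm _ _
    have hkey := key kr
    simp only [Fol, hkv] at hkey
    linarith
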